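/- Let 𝓑 be an infinite-dimensional complex Banach space and T ∈ B₀(𝓑) a compact operator whose spectral radius r(T) := lim_{n→∞} ‖T^n‖^{1/n} is positive. Let λ ∈ ℂ be an eigenvalue of T with |λ| = r(T), and suppose that the generalized eigenspace N_λ := ⋃_{N≥1} ker((T − λ·Id)^N) has dimension at least 2. Then lim_{n→∞} c_2(T^n)^{1/n} exists and equals |λ|. -/

import Mathlib

open Filter Topology MeasureTheory

noncomputable section

variable {B : Type*} [NormedAddCommGroup B] [NormedSpace ℂ B] [CompleteSpace B]

/-- The `k`-th Gelfand number of a bounded operator `T`: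
`c_k(T) = inf{‖T|_V‖ : V a closed subspace with dim(B/V) = k-1}`. -/
noncomputable def gelfand (T : B →L[ℂ] B) (k : ℕ) : ℝ :=
  sInf { r : ℝ | ∃ V : Submodule ℂ B, IsClosed (V : Set B) ∧
    Module.rank ℂ (B ⧸ V) = ((k - 1 : ℕ) : Cardinal) ∧
    r = sSup ((fun v => ‖T v‖) '' {v : B | v ∈ V ∧ ‖v‖ = 1}) }

/-- The `k`-th Kolmogorov number of a bounded operator `T`:
`F_k(T) = sup{ inf{‖Tv‖ : v ∈ V, ‖v‖ = 1} : V a subspace with dim V = k }`. -/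
noncomputable def kolmogorov (T : B →L[ℂ] B) (k : ℕ) : ℝ :=
  sSup { r : ℝ | ∃ V : Submodule ℂ B, Module.rank ℂ V = (k : Cardinal) ∧
    r = sInf ((fun v => ‖T v‖) '' {v : B | v ∈ V ∧ ‖v‖ = 1}) }

/-- The singular value function `φ_c^s(T) = c_1(T)⋯c_{⌊s⌋}(T)·c_{⌊s⌋+1}(T)^{s-⌊s⌋}`. -/
noncomputable def phiC (T : B →L[ℂ] B) (s : ℝ) : ℝ :=
  (∏ j ∈ Finset.Icc 1 ⌊s⌋₊, gelfand T j) * gelfand T (⌊s⌋₊ + 1) ^ (s - (⌊s⌋₊ : ℝ))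

/-- The singular value function defined via Kolmogorov numbers:
`φ_F^s(T) = F_1(T)⋯F_{⌊s⌋}(T)·F_{⌊s⌋+1}(T)^{s-⌊s⌋}`. -/
noncomputable def phiF (T : B →L[ℂ] B) (s : ℝ) : ℝ :=
  (∏ j ∈ Finset.Icc 1 ⌊s⌋₊, kolmogorov T j) * kolmogorov T (⌊s⌋₊ + 1) ^ (s - (⌊s⌋₊ : ℝ))

/-- The `s`-spectral radius `ρ_s(T) = lim_n φ_c^s(T^n)^{1/n}` (the limit exists, so we may
express it as a `limsup`). -/
noncomputable def rhoS (T : B →L[ℂ] B) (s : ℝ) : ℝ :=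
  Filter.limsup (fun n : ℕ => phiC (T ^ n) s ^ (1 / n : ℝ)) Filter.atTop

/-- The cocycle generated by `A` over `f`: `A^0(x) = Id`, `A^{n+1}(x) = A(fⁿ x) ∘ Aⁿ(x)`. -/
noncomputable def cocycle {M : Type*} (f : M → M) (A : M → (B →L[ℂ] B)) :
    ℕ → M → (B →L[ℂ] B)
  | 0, _ => 1
  | n + 1, x => A (f^[n] x) * cocycle f A n x

/-- The `s`-joint spectral radius `ρ̂_s(A) = lim_n sup_{x∈M} φ_c^s(Aⁿ(x))^{1/n}` (the limit
exists, so we may express it as a `limsup`). -/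
noncomputable def jointRad {M : Type*} (f : M → M) (A : M → (B →L[ℂ] B)) (s : ℝ) : ℝ :=
  Filter.limsup
    (fun n : ℕ => sSup (Set.range fun x : M => phiC (cocycle f A n x) s ^ (1 / n : ℝ)))
    Filter.atTop

/-- The `s`-generalized spectral radius `ρ̄_s(A) = limsup_n (sup_{x∈M} ρ_s(Aⁿ(x)))^{1/n}`. -/
noncomputable def genRad {M : Type*} (f : M → M) (A : M → (B →L[ℂ] B)) (s : ℝ) : ℝ :=
  Filter.limsup
    (fun n : ℕ => (sSup (Set.range fun x : M => rhoS (cocycle f A n x) s)) ^ (1 / n : ℝ))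
    Filter.atTop

/-- The Anosov Closing property for a map `f` on a metric space. -/
def AnosovClosing {M : Type*} [MetricSpace M] (f : M → M) : Prop :=
  ∃ C₁ ε₀ θ : ℝ, 0 < C₁ ∧ 0 < ε₀ ∧ 0 < θ ∧
    ∀ (z : M) (n : ℕ), dist (f^[n] z) z < ε₀ →
      ∃ p : M, f^[n] p = p ∧ ∀ j ≤ n,
        dist (f^[j] z) (f^[j] p) ≤
          C₁ * Real.exp (-θ * min (j : ℝ) ((n : ℝ) - (j : ℝ))) * dist (f^[n] z) z

/-- `A` is an `α`-Hölder continuous map. -/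
def HolderMap {M : Type*} [MetricSpace M] (α : ℝ) (A : M → (B →L[ℂ] B)) : Prop :=
  ∃ C₂ : ℝ, 0 < C₂ ∧ ∀ x y : M, ‖A x - A y‖ ≤ C₂ * dist x y ^ α

/-- The Hölder norm `‖A‖_α = sup_x ‖A x‖ + sup_{x ≠ y} ‖A x - A y‖ / d(x,y)^α`. -/
noncomputable def holderNorm {M : Type*} [MetricSpace M] (α : ℝ) (A : M → (B →L[ℂ] B)) : ℝ :=
  sSup (Set.range fun x : M => ‖A x‖) +
    sSup { r : ℝ | ∃ x y : M, x ≠ y ∧ r = ‖A x - A y‖ / dist x y ^ α }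

/-- Extended-real logarithm of a nonnegative real number, with `elog 0 = ⊥ = -∞`. -/
noncomputable def elog (x : ℝ) : EReal := if x ≤ 0 then ⊥ else ((Real.log x : ℝ) : EReal)

set_option linter.unusedSectionVars false
set_option maxHeartbeats 1000000

private lemma aux_rank_kersq (S : B →L[ℂ] B)
    (hdim : (2 : Cardinal) ≤ Module.rank ℂ
      ↥(⨆ N : ℕ, LinearMap.ker (((S ^ (N + 1) : B →L[ℂ] B) : B →ₗ[ℂ] B)))) :
    (2 : Cardinal) ≤ Module.rank ℂ ↥(LinearMap.ker (((S ^ 2 : B →L[ℂ] B) : B →ₗ[ℂ] B))) := by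
  by_cases h3 : LinearMap.ker (((S ^ 3 : B →L[ℂ] B) : B →ₗ[ℂ] B)) ≤ LinearMap.ker (((S ^ 2 : B →L[ℂ] B) : B →ₗ[ℂ] B))
  · refine hdim.trans (Submodule.rank_mono (iSup_le fun N => ?_))
    induction N with
    | zero =>
        intro v hv
        have h1 : S v = 0 := by simpa using hv
        rw [LinearMap.mem_ker, ContinuousLinearMap.coe_coe, pow_two, ContinuousLinearMap.mul_apply, h1, map_zero]
    | succ N ih =>
        intro v hv
        rw [LinearMap.mem_ker, ContinuousLinearMap.coe_coe, pow_succ, ContinuousLinearMap.mul_apply] at hv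
        have hSv : S v ∈ LinearMap.ker (((S ^ (N + 1) : B →L[ℂ] B) : B →ₗ[ℂ] B)) := hv
        have h2 := ih hSv
        rw [LinearMap.mem_ker, ContinuousLinearMap.coe_coe] at h2
        refine h3 ?_
        rw [LinearMap.mem_ker, ContinuousLinearMap.coe_coe, pow_succ, ContinuousLinearMap.mul_apply]
        exact h2
  · obtain ⟨v, hv3, hv2⟩ := SetLike.not_le_iff_exists.1 h3
    rw [LinearMap.mem_ker, ContinuousLinearMap.coe_coe] at hv3
    rw [LinearMap.mem_ker, ContinuousLinearMap.coe_coe] at hv2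
    have ha : (S ^ 2) (S v) = 0 := by
      rw [← ContinuousLinearMap.mul_apply, ← pow_succ]
      exact hv3
    have hb : (S ^ 2) ((S ^ 2) v) = 0 := by
      rw [← ContinuousLinearMap.mul_apply, ← pow_add]
      show (S ^ (1 + 3)) v = 0
      rw [pow_add, ContinuousLinearMap.mul_apply, hv3, map_zero]
    set g : Fin 2 → ↥(LinearMap.ker (((S ^ 2 : B →L[ℂ] B) : B →ₗ[ℂ] B))) :=
      ![⟨S v, LinearMap.mem_ker.2 ha⟩, ⟨(S ^ 2) v, LinearMap.mem_ker.2 hb⟩] with hg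
    have hli : LinearIndependent ℂ g := by
      apply LinearIndependent.of_comp (LinearMap.ker (((S ^ 2 : B →L[ℂ] B) : B →ₗ[ℂ] B))).subtype
      have hcomp : ((LinearMap.ker (((S ^ 2 : B →L[ℂ] B) : B →ₗ[ℂ] B))).subtype ∘ g) = ![S v, (S ^ 2) v] := by
        ext i; fin_cases i <;> rfl
      rw [hcomp, linearIndependent_fin2]
      constructor
      · simpa using hv2
      · intro a hav
        simp only [Matrix.cons_val_one, Matrix.head_cons, Matrix.cons_val_zero] at hav
        have := congrArg S hav
        rw [_root_.map_smul] at this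
        have hz : S ((S ^ 2) v) = 0 := by
          rw [← ContinuousLinearMap.mul_apply, ← pow_succ']
          exact hv3
        rw [hz, smul_zero] at this
        have : (S ^ 2) v = 0 := by
          rw [pow_two, ContinuousLinearMap.mul_apply]
          exact this.symm
        exact hv2 this
    simpa using hli.cardinal_lift_le_rank

private lemma aux_exists_unit {K V : Submodule ℂ B} (hK : (2 : Cardinal) ≤ Module.rank ℂ K)
    (hV : Module.rank ℂ (B ⧸ V) = 1) :
    ∃ u : B, u ∈ V ∧ u ∈ K ∧ ‖u‖ = 1 := by
  have hex : ∃ v : B, v ∈ V ∧ v ∈ K ∧ v ≠ 0 := by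
    by_contra h
    push_neg at h
    have hinj : Function.Injective (V.mkQ.comp K.subtype) := by
      rw [← LinearMap.ker_eq_bot]
      refine (Submodule.eq_bot_iff _).2 fun x hx => ?_
      rw [LinearMap.mem_ker, LinearMap.comp_apply, Submodule.mkQ_apply,
        Submodule.Quotient.mk_eq_zero] at hx
      exact Subtype.ext (h _ hx x.2)
    have hle := (V.mkQ.comp K.subtype).rank_le_of_injective hinj
    rw [hV] at hle
    have h21 : ¬ (2 : Cardinal) ≤ 1 := by
      rw [not_le]
      exact_mod_cast Nat.one_lt_two
    exact h21 (hK.trans hle)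
  obtain ⟨v, hvV, hvK, hv0⟩ := hex
  have hnv : ‖v‖ ≠ 0 := norm_ne_zero_iff.2 hv0
  refine ⟨((‖v‖ : ℂ))⁻¹ • v, V.smul_mem _ hvV, K.smul_mem _ hvK, ?_⟩
  rw [norm_smul, norm_inv]
  simp [hnv]

private lemma aux_quot_rank (f : B →L[ℂ] ℂ) (x₀ : B) (hx : f x₀ ≠ 0) :
    Module.rank ℂ (B ⧸ LinearMap.ker (f : B →ₗ[ℂ] ℂ)) = 1 := by
  have hsurj : Function.Surjective (f : B →ₗ[ℂ] ℂ) := by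
    intro c
    refine ⟨(c / f x₀) • x₀, ?_⟩
    simp only [LinearMap.map_smul, ContinuousLinearMap.coe_coe, smul_eq_mul]
    field_simp
  have e := (f : B →ₗ[ℂ] ℂ).quotKerEquivRange
  have hker : LinearMap.ker (f : B →ₗ[ℂ] ℂ) = LinearMap.ker (f : B →ₗ[ℂ] ℂ) := rfl
  rw [hker] at e
  have h := e.lift_rank_eq
  rw [LinearMap.range_eq_top.2 hsurj, rank_top, Module.rank_self] at h
  simpa using h

private lemma aux_formula (T : B →L[ℂ] B) (lam : ℂ) (u : B)
    (hS2 : (T - lam • 1) ((T - lam • 1) u) = 0) (n : ℕ) :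
    (T ^ (n + 1)) u = lam ^ (n + 1) • u
      + (((n + 1 : ℕ) : ℂ) * lam ^ n) • ((T - lam • 1) u) := by
  set S := T - lam • (1 : B →L[ℂ] B) with hSdef
  have hT : ∀ x : B, T x = S x + lam • x := by
    intro x
    rw [hSdef]
    simp [ContinuousLinearMap.sub_apply, ContinuousLinearMap.smul_apply,
      ContinuousLinearMap.one_apply]
  have hTSu : T (S u) = lam • S u := by rw [hT (S u), hS2, zero_add]
  induction n with
  | zero =>
      simp only [zero_add, pow_one, pow_zero, Nat.cast_one, one_mul, one_smul]
      rw [hT u]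
      abel
  | succ n ih =>
      have hstep : (T ^ (n + 2)) u = T ((T ^ (n + 1)) u) := by
        rw [pow_succ', ContinuousLinearMap.mul_apply]
      rw [hstep, ih, map_add, _root_.map_smul, _root_.map_smul, hT u, hTSu]
      match_scalars
      · push_cast; ring
      · push_cast; ring

private lemma aux_norm_lower (T : B →L[ℂ] B) (lam : ℂ) (hlam : lam ≠ 0) (u : B) (hu : ‖u‖ = 1)
    (hK : ((T - lam • (1 : B →L[ℂ] B)) ^ 2) u = 0) (n : ℕ) :
    ‖lam‖ ^ (n + 1) ≤
      ‖(T ^ (n + 1)) u‖ *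
        (1 + ((n : ℝ) + 1) * (‖T - lam • (1 : B →L[ℂ] B)‖ / ‖lam‖)) := by
  set S := T - lam • (1 : B →L[ℂ] B) with hSdef
  set A := ‖lam‖ with hA
  have hA0 : 0 < A := by rw [hA]; exact norm_pos_iff.mpr hlam
  have hS2 : S (S u) = 0 := by
    rw [← ContinuousLinearMap.mul_apply, ← pow_two]; exact hK
  have F := aux_formula T lam u hS2 n
  rw [← hSdef] at F
  set w := (T ^ (n + 1)) u with hw
  set c : ℂ := ((n + 1 : ℕ) : ℂ) * lam ^ n with hc
  have hcnorm : ‖c‖ = ((n : ℝ) + 1) * A ^ n := by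
    rw [hc, norm_mul, norm_pow, Complex.norm_natCast, ← hA]
    push_cast; ring
  have hSw : S w = lam ^ (n + 1) • S u := by
    rw [F, map_add, _root_.map_smul, _root_.map_smul, hS2, smul_zero, add_zero]
  have hpow : ‖lam ^ (n + 1)‖ = A ^ (n + 1) := by
    rw [norm_pow, hA]
  have hSu : A ^ (n + 1) * ‖S u‖ ≤ ‖S‖ * ‖w‖ := by
    calc A ^ (n + 1) * ‖S u‖ = ‖lam ^ (n + 1) • S u‖ := by rw [norm_smul, hpow]
      _ = ‖S w‖ := by rw [hSw]
      _ ≤ ‖S‖ * ‖w‖ := S.le_opNorm w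
  have hSu' : ‖S u‖ ≤ ‖S‖ * ‖w‖ / A ^ (n + 1) := by
    rw [le_div_iff₀ (by positivity)]
    calc ‖S u‖ * A ^ (n + 1) = A ^ (n + 1) * ‖S u‖ := by ring
      _ ≤ ‖S‖ * ‖w‖ := hSu
  have key : A ^ (n + 1) ≤ ‖w‖ + (((n : ℝ) + 1) * A ^ n) * ‖S u‖ := by
    have heq : lam ^ (n + 1) • u = w - c • S u := by rw [F]; abel
    calc A ^ (n + 1) = ‖lam ^ (n + 1) • u‖ := by rw [norm_smul, hu, mul_one, hpow]
      _ = ‖w - c • S u‖ := by rw [heq]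
      _ ≤ ‖w‖ + ‖c • S u‖ := norm_sub_le _ _
      _ = ‖w‖ + (((n : ℝ) + 1) * A ^ n) * ‖S u‖ := by rw [norm_smul, hcnorm]
  have hfin : ‖w‖ + (((n : ℝ) + 1) * A ^ n) * ‖S u‖ ≤
      ‖w‖ * (1 + ((n : ℝ) + 1) * (‖S‖ / A)) := by
    have h1 : (((n : ℝ) + 1) * A ^ n) * ‖S u‖ ≤
        (((n : ℝ) + 1) * A ^ n) * (‖S‖ * ‖w‖ / A ^ (n + 1)) := by
      gcongr
    have h2 : (((n : ℝ) + 1) * A ^ n) * (‖S‖ * ‖w‖ / A ^ (n + 1)) =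
        ‖w‖ * (((n : ℝ) + 1) * (‖S‖ / A)) := by
      rw [pow_succ]
      field_simp
    nlinarith [norm_nonneg w]
  linarith

private lemma aux_tendsto (A c : ℝ) (hA : 0 < A) (hc : 0 < c) :
    Filter.Tendsto (fun n : ℕ => (A ^ n / (1 + n * c)) ^ (1 / n : ℝ)) Filter.atTop
      (nhds A) := by
  have hpos : ∀ n : ℕ, (0 : ℝ) < 1 + n * c := fun n => by positivity
  have hseq : Tendsto (fun n : ℕ => 1 + (n : ℝ) * c) atTop atTop :=
    tendsto_atTop_add_const_left _ 1 (Tendsto.atTop_mul_const hc tendsto_natCast_atTop_atTop)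
  have f1 : Tendsto (fun n : ℕ => Real.log (1 + n * c) / (1 + n * c)) atTop (nhds 0) := by
    have h := Real.tendsto_pow_log_div_mul_add_atTop 1 0 1 one_ne_zero
    simp only [pow_one, one_mul, add_zero] at h
    exact h.comp hseq
  have f2 : Tendsto (fun n : ℕ => (1 + (n : ℝ) * c) / n) atTop (nhds c) := by
    have h : Tendsto (fun n : ℕ => 1 / (n : ℝ) + c) atTop (nhds (0 + c)) :=
      tendsto_one_div_atTop_nhds_zero_nat.add tendsto_const_nhds
    rw [zero_add] at h
    refine h.congr' ?_
    filter_upwards [eventually_ge_atTop 1] with n hn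
    have hn0 : (n : ℝ) ≠ 0 := Nat.cast_ne_zero.2 (by omega)
    field_simp
  have flog : Tendsto (fun n : ℕ => Real.log (1 + n * c) * (1 / (n : ℝ))) atTop (nhds 0) := by
    have h := f1.mul f2
    rw [zero_mul] at h
    refine h.congr' ?_
    filter_upwards [eventually_ge_atTop 1] with n hn
    have hn0 : (n : ℝ) ≠ 0 := Nat.cast_ne_zero.2 (by omega)
    have hx : (1 : ℝ) + n * c ≠ 0 := (hpos n).ne'
    field_simp
  have h1 : Tendsto (fun n : ℕ => (1 + (n : ℝ) * c) ^ (1 / n : ℝ)) atTop (nhds 1) := by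
    have h := (Real.continuous_exp.tendsto 0).comp flog
    rw [Real.exp_zero] at h
    refine h.congr fun n => ?_
    exact (Real.rpow_def_of_pos (hpos n) _).symm
  have hmain : Tendsto (fun n : ℕ => A / (1 + (n : ℝ) * c) ^ (1 / n : ℝ)) atTop (nhds A) := by
    have h := Tendsto.div (tendsto_const_nhds (x := A)) h1 one_ne_zero
    rw [div_one] at h
    exact h
  refine hmain.congr' ?_
  filter_upwards [eventually_ge_atTop 1] with n hn
  have hn0 : (n : ℝ) ≠ 0 := Nat.cast_ne_zero.2 (by omega)
  rw [Real.div_rpow (by positivity) (hpos n).le]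
  congr 1
  rw [← Real.rpow_natCast A n, ← Real.rpow_mul hA.le, mul_one_div_cancel hn0, Real.rpow_one]

/-- **Asymptotics of the second Gelfand number** (step in the proof of Lemma 3 of the paper):
if `T` is a compact operator with positive spectral radius `r = lim_n ‖Tⁿ‖^{1/n}`, `λ` is an
eigenvalue of `T` with `|λ| = r`, and the generalized eigenspace
`N_λ = ⋃_{N ≥ 1} ker((T - λ·Id)^N)` has dimension at least `2`, then
`lim_n c_2(Tⁿ)^{1/n}` exists and equals `|λ|`. -/
theorem gelfand_two_limit_eq_abs_eigenvalue (hinf : ¬ FiniteDimensional ℂ B)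
    (T : B →L[ℂ] B) (hT : IsCompactOperator T)
    (r : ℝ) (hr : 0 < r)
    (hrlim : Filter.Tendsto (fun n : ℕ => ‖T ^ n‖ ^ (1 / n : ℝ)) Filter.atTop (nhds r))
    (lam : ℂ) (hlam : ‖lam‖ = r)
    (heig : ∃ v : B, v ≠ 0 ∧ T v = lam • v)
    (hdim : (2 : Cardinal) ≤ Module.rank ℂ
      ↥(⨆ N : ℕ, LinearMap.ker (((T - lam • (1 : B →L[ℂ] B)) ^ (N + 1) : B →L[ℂ] B) : B →ₗ[ℂ] B))) :
    Filter.Tendsto (fun n : ℕ => gelfand (T ^ n) 2 ^ (1 / n : ℝ)) Filter.atTop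
      (nhds (‖lam‖)) := by
  classical
  set S := T - lam • (1 : B →L[ℂ] B) with hSdef
  set A := ‖lam‖ with hAdef
  have hA : 0 < A := by rw [hlam]; exact hr
  have hlam0 : lam ≠ 0 := by
    intro h
    rw [hAdef, h] at hA
    simp at hA
  have hK2 : (2 : Cardinal) ≤ Module.rank ℂ ↥(LinearMap.ker (((S ^ 2 : B →L[ℂ] B) : B →ₗ[ℂ] B))) :=
    aux_rank_kersq S hdim
  set cc := ‖S‖ / A + 1 with hccdef
  have hcc : 0 < cc := by positivity
  have hSA : ‖S‖ / A ≤ cc := by rw [hccdef]; linarith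
  have hBrank : (0 : Cardinal) < Module.rank ℂ B :=
    lt_of_lt_of_le (by norm_num) (hK2.trans (Submodule.rank_le _))
  have hBn : Nontrivial B := rank_pos_iff_nontrivial.1 hBrank
  obtain ⟨x₀, hx₀⟩ := exists_ne (0 : B)
  obtain ⟨f, hf1, hfx⟩ := exists_dual_vector ℂ x₀ (norm_ne_zero_iff.2 hx₀)
  have hfx0 : f x₀ ≠ 0 := by
    rw [hfx]; exact Complex.ofReal_ne_zero.2 (norm_ne_zero_iff.2 hx₀)
  have hV₀r : Module.rank ℂ (B ⧸ LinearMap.ker (f : B →ₗ[ℂ] ℂ)) = 1 := aux_quot_rank f x₀ hfx0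
  have gb : ∀ n : ℕ, A ^ (n + 1) / (1 + ((n : ℝ) + 1) * cc) ≤ gelfand (T ^ (n + 1)) 2
      ∧ gelfand (T ^ (n + 1)) 2 ≤ ‖T ^ (n + 1)‖ := by
    intro n
    set s : Set ℝ := { r : ℝ | ∃ V : Submodule ℂ B, IsClosed (V : Set B) ∧
        Module.rank ℂ (B ⧸ V) = ((2 - 1 : ℕ) : Cardinal) ∧
        r = sSup ((fun v => ‖(T ^ (n + 1)) v‖) '' {v : B | v ∈ V ∧ ‖v‖ = 1}) } with hs
    have hgel : gelfand (T ^ (n + 1)) 2 = sInf s := rfl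
    have hL0 : (0 : ℝ) < A ^ (n + 1) / (1 + ((n : ℝ) + 1) * cc) := by positivity
    have hlow : ∀ x ∈ s, A ^ (n + 1) / (1 + ((n : ℝ) + 1) * cc) ≤ x := by
      rintro x ⟨V, hVc, hVr, rfl⟩
      have hVr1 : Module.rank ℂ (B ⧸ V) = 1 := by simpa using hVr
      obtain ⟨u, huV, huK, hu1⟩ := aux_exists_unit hK2 hVr1
      have huK' : ((T - lam • (1 : B →L[ℂ] B)) ^ 2) u = 0 := by
        rw [← hSdef]
        exact LinearMap.mem_ker.1 huK
      have hnl := aux_norm_lower T lam hlam0 u hu1 huK' n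
      rw [← hSdef, ← hAdef] at hnl
      have hd1 : (0 : ℝ) < 1 + ((n : ℝ) + 1) * (‖S‖ / A) := by positivity
      have hstep : A ^ (n + 1) / (1 + ((n : ℝ) + 1) * cc) ≤ ‖(T ^ (n + 1)) u‖ := by
        calc A ^ (n + 1) / (1 + ((n : ℝ) + 1) * cc)
            ≤ A ^ (n + 1) / (1 + ((n : ℝ) + 1) * (‖S‖ / A)) := by
              gcongr
          _ ≤ ‖(T ^ (n + 1)) u‖ := (div_le_iff₀ hd1).2 hnl
      refine hstep.trans (le_csSup ?_ ?_)
      · refine ⟨‖T ^ (n + 1)‖, ?_⟩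
        rintro y ⟨v, ⟨hv, hv1⟩, rfl⟩
        simpa [hv1] using (T ^ (n + 1)).le_opNorm v
      · exact ⟨u, ⟨huV, hu1⟩, rfl⟩
    have hmem : sSup ((fun v => ‖(T ^ (n + 1)) v‖) ''
        {v : B | v ∈ LinearMap.ker (f : B →ₗ[ℂ] ℂ) ∧ ‖v‖ = 1}) ∈ s :=
      ⟨LinearMap.ker (f : B →ₗ[ℂ] ℂ), ContinuousLinearMap.isClosed_ker f, by simpa using hV₀r, rfl⟩
    constructor
    · rw [hgel]; exact le_csInf ⟨_, hmem⟩ hlow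
    · rw [hgel]
      refine (csInf_le ⟨_, hlow⟩ hmem).trans ?_
      refine Real.sSup_le ?_ (norm_nonneg _)
      rintro y ⟨v, ⟨hv, hv1⟩, rfl⟩
      simpa [hv1] using (T ^ (n + 1)).le_opNorm v
  have hub : Tendsto (fun n : ℕ => ‖T ^ n‖ ^ (1 / n : ℝ)) atTop (nhds A) := by
    rw [hlam]; exact hrlim
  have hlb := aux_tendsto A cc hA hcc
  refine tendsto_of_tendsto_of_tendsto_of_le_of_le' hlb hub ?_ ?_
  · filter_upwards [eventually_ge_atTop 1] with n hn
    obtain ⟨m, rfl⟩ : ∃ m, n = m + 1 := ⟨n - 1, by omega⟩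
    have h1 := (gb m).1
    have h0 : (0 : ℝ) ≤ A ^ (m + 1) / (1 + ((m : ℝ) + 1) * cc) := by positivity
    have hcast : ((m + 1 : ℕ) : ℝ) = (m : ℝ) + 1 := by push_cast; ring
    rw [hcast]
    exact Real.rpow_le_rpow h0 h1 (by positivity)
  · filter_upwards [eventually_ge_atTop 1] with n hn
    obtain ⟨m, rfl⟩ : ∃ m, n = m + 1 := ⟨n - 1, by omega⟩
    have h0 : (0 : ℝ) ≤ gelfand (T ^ (m + 1)) 2 :=
      le_trans (by positivity) (gb m).1
    exact Real.rpow_le_rpow h0 (gb m).2 (by positivity)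

end
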